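/- For all reals m₁ > 0, m₂ > 0, p ≥ 0, q ≥ 0 and A ≤ 0, one has (m₁^{m₁} m₂^{m₂}/(Γ(m₁)Γ(m₂))) · ∫₀^∞ ∫₀^∞ u₁^{m₁−1} u₂^{m₂−1} e^{−m₁u₁ − m₂u₂} · e^{(p·u₁ + q·u₂)A} · I₀(2√(p q u₁ u₂)·A) du₁ du₂ = (m₁^{m₁}/(m₁ − pA)^{m₁}) · (m₂^{m₂}/(m₂ − qA)^{m₂}) · ₂F₁(m₁, m₂; 1; p q A² / ((m₁ − pA)(m₂ − qA))), where the argument of ₂F₁ lies in [0,1). -/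

import Mathlib

/-!
With `r₁ = m₁ - p A > 0` and `r₂ = m₂ - q A > 0`, the power series of `I₀` turns the integrand
into `∑ₖ (p q A²)ᵏ / (k!)² · u₁^(m₁+k-1) e^(-r₁ u₁) · u₂^(m₂+k-1) e^(-r₂ u₂)`. Integrating term by
term, each summand contributes `(p q A²)ᵏ / (k!)² · Γ(m₁+k) Γ(m₂+k) / (r₁^(m₁+k) r₂^(m₂+k))`, and
`Γ(m + k) = (m)ₖ Γ(m)` identifies the sum with `Γ(m₁) Γ(m₂) r₁^(-m₁) r₂^(-m₂) ₂F₁(m₁, m₂; 1; z)`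
for `z = p q A² / (r₁ r₂) < 1`. The exchange of sums and integrals is justified because the
series of integrated absolute values is that same convergent `₂F₁` series.
-/
open Real MeasureTheory

/-- Rising factorial (Pochhammer symbol) `(a)_k` for a real `a`. -/
noncomputable def risingFactorial (a : ℝ) (k : ℕ) : ℝ :=
  ∏ i ∈ Finset.range k, (a + i)

/-- The Gauss hypergeometric function `₂F₁(a, b; 1; z)`. -/
noncomputable def gauss2F1 (a b z : ℝ) : ℝ :=
  ∑' k : ℕ, risingFactorial a k * risingFactorial b k / (Nat.factorial k : ℝ) ^ 2 * z ^ k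

/-- The modified Bessel function of the first kind of order zero. -/
noncomputable def besselI0 (x : ℝ) : ℝ :=
  ∑' k : ℕ, (x / 2) ^ (2 * k) / (Nat.factorial k : ℝ) ^ 2

open Filter Set Topology

lemma risingFactorial_succ (a : ℝ) (k : ℕ) :
    risingFactorial a (k + 1) = risingFactorial a k * (a + k) :=
  Finset.prod_range_succ _ _

lemma Gamma_add_nat_eq_risingFactorial_mul {m : ℝ} (hm : 0 < m) (k : ℕ) :
    Gamma (m + k) = risingFactorial m k * Gamma m := by
  induction k with
  | zero => simp [risingFactorial]
  | succ k ih =>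
    rw [Nat.cast_succ, ← add_assoc, Gamma_add_one (by positivity), ih, risingFactorial_succ]
    ring

lemma tendsto_add_div_natCast_add_one (a : ℝ) :
    Tendsto (fun k : ℕ => (a + k) / (k + 1)) atTop (𝓝 1) := by
  have h : Tendsto (fun k : ℕ => 1 + (a - 1) / ((k : ℝ) + 1)) atTop (𝓝 (1 + 0)) :=
    tendsto_const_nhds.add <| tendsto_const_nhds.div_atTop <|
      tendsto_atTop_add_const_right _ 1 tendsto_natCast_atTop_atTop
  rw [add_zero] at h
  refine h.congr fun k => ?_
  field_simp
  ring

lemma summable_gauss2F1_series (a b : ℝ) {z : ℝ} (hz : |z| < 1) :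
    Summable fun k : ℕ =>
      risingFactorial a k * risingFactorial b k / (Nat.factorial k : ℝ) ^ 2 * z ^ k := by
  set ρ : ℕ → ℝ := fun k => (a + k) / (k + 1) * ((b + k) / (k + 1)) * z
  have hρ : Tendsto (fun k => ‖ρ k‖) atTop (𝓝 |z|) := by
    have h := (((tendsto_add_div_natCast_add_one a).mul
      (tendsto_add_div_natCast_add_one b)).mul_const z).norm
    rwa [one_mul, one_mul, Real.norm_eq_abs] at h
  have hstep (k : ℕ) :
      risingFactorial a (k + 1) * risingFactorial b (k + 1) / ((k + 1).factorial : ℝ) ^ 2 *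
        z ^ (k + 1) =
      ρ k * (risingFactorial a k * risingFactorial b k / (k.factorial : ℝ) ^ 2 * z ^ k) := by
    simp only [ρ, risingFactorial_succ, Nat.factorial_succ, Nat.cast_mul, Nat.cast_succ]
    field_simp
    ring
  refine summable_of_ratio_norm_eventually_le (r := (1 + |z|) / 2) (by linarith) ?_
  filter_upwards [hρ.eventually (eventually_le_nhds (by linarith : |z| < (1 + |z|) / 2))]
    with k hk
  rw [hstep, norm_mul]
  exact mul_le_mul_of_nonneg_right hk (norm_nonneg _)

section SeriesIntegral

variable {α β : Type*} [MeasurableSpace α] [MeasurableSpace β] {μ : Measure α} {ν : Measure β}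

lemma ae_summable_norm_of_summable_integral_norm {E : Type*} [NormedAddCommGroup E]
    {f : ℕ → α → E}
    (hf : ∀ k, Integrable (f k) μ) (hs : Summable fun k => ∫ x, ‖f k x‖ ∂μ) :
    ∀ᵐ x ∂μ, Summable fun k => ‖f k x‖ := by
  refine summable_norm_of_tsum_eLpNorm_ne_top le_rfl (fun k => (hf k).1) ?_
  simp_rw [eLpNorm_one_eq_lintegral_enorm, ← ofReal_integral_norm_eq_lintegral_enorm (hf _)]
  rw [← ENNReal.ofReal_tsum_of_nonneg (fun k => integral_nonneg fun x => norm_nonneg _) hs]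
  exact ENNReal.ofReal_ne_top

lemma integral_integral_tsum_mul {a : ℕ → α → ℝ} {b : ℕ → β → ℝ}
    (ha : ∀ k, Integrable (a k) μ) (hb : ∀ k, Integrable (b k) ν)
    (hs : Summable fun k => (∫ x, ‖a k x‖ ∂μ) * ∫ y, ‖b k y‖ ∂ν) :
    ∫ x, ∫ y, ∑' k, a k x * b k y ∂ν ∂μ = ∑' k, (∫ x, a k x ∂μ) * ∫ y, b k y ∂ν := by
  set B : ℕ → ℝ := fun k => ∫ y, ‖b k y‖ ∂ν
  have hB (k : ℕ) : 0 ≤ B k := integral_nonneg fun y => norm_nonneg _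
  have haB (k : ℕ) : Integrable (fun x => a k x * B k) μ := (ha k).mul_const _
  have hsB : Summable fun k => ∫ x, ‖a k x * B k‖ ∂μ := by
    refine hs.congr fun k => ?_
    simp_rw [norm_mul, Real.norm_of_nonneg (hB k), integral_mul_const, B]
  have hinner : ∀ᵐ x ∂μ, ∫ y, ∑' k, a k x * b k y ∂ν = ∑' k, a k x * ∫ y, b k y ∂ν := by
    -- the inner series converges wherever `∑ₖ |a k x| ∫ ‖b k‖` does, i.e. almost everywhere
    filter_upwards [ae_summable_norm_of_summable_integral_norm haB hsB] with x hx
    refine (integral_tsum_of_summable_integral_norm (fun k => (hb k).const_mul (a k x))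
      (hx.congr fun k => ?_)).symm.trans (tsum_congr fun k => integral_const_mul _ _)
    simp_rw [norm_mul, Real.norm_of_nonneg (hB k), integral_const_mul, B]
  rw [integral_congr_ae hinner]
  refine (integral_tsum_of_summable_integral_norm (fun k => (ha k).mul_const _) ?_).symm.trans
    (tsum_congr fun k => integral_mul_const _ _)
  refine Summable.of_nonneg_of_le (fun k => integral_nonneg fun x => norm_nonneg _)
    (fun k => ?_) hsB
  simp_rw [norm_mul, integral_mul_const, Real.norm_of_nonneg (hB k)]
  exact mul_le_mul_of_nonneg_left (norm_integral_le_integral_norm _)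
    (integral_nonneg fun x => norm_nonneg _)

end SeriesIntegral

lemma integrableOn_rpow_sub_one_mul_exp_neg_mul_Ioi {s r : ℝ} (hs : 0 < s) (hr : 0 < r) :
    IntegrableOn (fun x => x ^ (s - 1) * exp (-(r * x))) (Ioi 0) := by
  simpa using integrableOn_rpow_mul_exp_neg_mul_rpow (by linarith : -1 < s - 1) one_pos hr

lemma integral_rpow_add_nat_sub_one_mul_exp_neg_mul_Ioi {s r : ℝ} (hs : 0 < s) (hr : 0 < r)
    (k : ℕ) :
    ∫ x in Ioi 0, x ^ (s + k - 1) * exp (-(r * x)) =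
      (1 / r) ^ s * Gamma s * (risingFactorial s k * (1 / r) ^ k) := by
  rw [integral_rpow_mul_exp_neg_mul_Ioi (by positivity) hr,
    Gamma_add_nat_eq_risingFactorial_mul hs, rpow_add (by positivity), rpow_natCast]
  ring

lemma integral_Ioi_integral_Ioi_tsum_eq_gauss2F1 {m₁ m₂ r₁ r₂ c : ℝ} (hm₁ : 0 < m₁)
    (hm₂ : 0 < m₂) (hr₁ : 0 < r₁) (hr₂ : 0 < r₂) (hz : |c / (r₁ * r₂)| < 1) :
    ∫ u₁ in Ioi 0, ∫ u₂ in Ioi 0, ∑' k : ℕ, c ^ k / (k.factorial : ℝ) ^ 2 *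
        (u₁ ^ (m₁ + k - 1) * exp (-(r₁ * u₁))) * (u₂ ^ (m₂ + k - 1) * exp (-(r₂ * u₂))) =
      Gamma m₁ * Gamma m₂ * ((1 / r₁) ^ m₁ * (1 / r₂) ^ m₂) *
        gauss2F1 m₁ m₂ (c / (r₁ * r₂)) := by
  have hint (m r : ℝ) (hm : 0 < m) (hr : 0 < r) (k : ℕ) :=
    integrableOn_rpow_sub_one_mul_exp_neg_mul_Ioi (by positivity : 0 < m + k) hr
  have hnorm (m r : ℝ) (k : ℕ) : ∫ x in Ioi 0, ‖x ^ (m + k - 1) * exp (-(r * x))‖ =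
      ∫ x in Ioi 0, x ^ (m + k - 1) * exp (-(r * x)) :=
    setIntegral_congr_fun measurableSet_Ioi fun x (hx : 0 < x) =>
      Real.norm_of_nonneg (by positivity)
  have hnorm_const_mul (m r d : ℝ) (k : ℕ) :
      ∫ x in Ioi 0, ‖d * (x ^ (m + k - 1) * exp (-(r * x)))‖ =
        ‖d‖ * ∫ x in Ioi 0, x ^ (m + k - 1) * exp (-(r * x)) := by
    simp_rw [norm_mul d, integral_const_mul, hnorm]
  have hterm (w : ℝ) (k : ℕ) :
      w ^ k / (k.factorial : ℝ) ^ 2 *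
        ((1 / r₁) ^ m₁ * Gamma m₁ * (risingFactorial m₁ k * (1 / r₁) ^ k)) *
        ((1 / r₂) ^ m₂ * Gamma m₂ * (risingFactorial m₂ k * (1 / r₂) ^ k)) =
      Gamma m₁ * Gamma m₂ * ((1 / r₁) ^ m₁ * (1 / r₂) ^ m₂) *
        (risingFactorial m₁ k * risingFactorial m₂ k / (k.factorial : ℝ) ^ 2 *
          (w / (r₁ * r₂)) ^ k) := by
    simp only [div_pow, mul_pow, one_div, inv_pow]
    ring
  rw [integral_integral_tsum_mul (fun k => (hint m₁ r₁ hm₁ hr₁ k).const_mul _)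
    (hint m₂ r₂ hm₂ hr₂)]
  · simp_rw [integral_const_mul, integral_rpow_add_nat_sub_one_mul_exp_neg_mul_Ioi hm₁ hr₁,
      integral_rpow_add_nat_sub_one_mul_exp_neg_mul_Ioi hm₂ hr₂, hterm, tsum_mul_left, gauss2F1]
  · have hz' : |(|c| / (r₁ * r₂))| < 1 := by rwa [abs_div, abs_abs, ← abs_div]
    refine ((summable_gauss2F1_series m₁ m₂ hz').mul_left
      (Gamma m₁ * Gamma m₂ * ((1 / r₁) ^ m₁ * (1 / r₂) ^ m₂))).congr fun k => ?_
    rw [← hterm, hnorm_const_mul, hnorm,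
      integral_rpow_add_nat_sub_one_mul_exp_neg_mul_Ioi hm₁ hr₁,
      integral_rpow_add_nat_sub_one_mul_exp_neg_mul_Ioi hm₂ hr₂, norm_div, norm_pow, norm_pow,
      Real.norm_eq_abs, Real.norm_natCast]

lemma besselI0_two_mul_sqrt_mul {x : ℝ} (hx : 0 ≤ x) (A : ℝ) :
    besselI0 (2 * √x * A) = ∑' k : ℕ, (x * A ^ 2) ^ k / (k.factorial : ℝ) ^ 2 := by
  refine tsum_congr fun k => ?_
  rw [mul_assoc, mul_div_cancel_left₀ _ two_ne_zero, pow_mul, mul_pow, sq_sqrt hx]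

lemma rpow_mul_exp_mul_besselI0_eq_tsum {m₁ m₂ p q A u₁ u₂ : ℝ} (hp : 0 ≤ p) (hq : 0 ≤ q)
    (hu₁ : 0 < u₁) (hu₂ : 0 < u₂) :
    u₁ ^ (m₁ - 1) * u₂ ^ (m₂ - 1) * exp (-(m₁ * u₁) - m₂ * u₂) * exp ((p * u₁ + q * u₂) * A) *
        besselI0 (2 * √(p * q * u₁ * u₂) * A) =
      ∑' k : ℕ, (p * q * A ^ 2) ^ k / (k.factorial : ℝ) ^ 2 *
        (u₁ ^ (m₁ + k - 1) * exp (-((m₁ - p * A) * u₁))) *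
        (u₂ ^ (m₂ + k - 1) * exp (-((m₂ - q * A) * u₂))) := by
  rw [besselI0_two_mul_sqrt_mul (by positivity), ← tsum_mul_left]
  refine tsum_congr fun k => ?_
  have hexp : exp (-(m₁ * u₁) - m₂ * u₂) * exp ((p * u₁ + q * u₂) * A) =
      exp (-((m₁ - p * A) * u₁)) * exp (-((m₂ - q * A) * u₂)) := by
    rw [← exp_add, ← exp_add]
    ring_nf
  rw [add_sub_right_comm m₁, add_sub_right_comm m₂, rpow_add_natCast hu₁.ne',
    rpow_add_natCast hu₂.ne']
  linear_combination
    u₁ ^ (m₁ - 1) * u₂ ^ (m₂ - 1) * ((p * q * u₁ * u₂ * A ^ 2) ^ k / (k.factorial : ℝ) ^ 2) * hexp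

theorem stmt_1 (m₁ m₂ p q A : ℝ) (hm₁ : 0 < m₁) (hm₂ : 0 < m₂)
    (hp : 0 ≤ p) (hq : 0 ≤ q) (hA : A ≤ 0) :
    p * q * A ^ 2 / ((m₁ - p * A) * (m₂ - q * A)) ∈ Set.Ico (0 : ℝ) 1 ∧
    m₁ ^ m₁ * m₂ ^ m₂ / (Real.Gamma m₁ * Real.Gamma m₂) *
      ∫ u₁ in Set.Ioi (0 : ℝ), ∫ u₂ in Set.Ioi (0 : ℝ),
        u₁ ^ (m₁ - 1) * u₂ ^ (m₂ - 1) * Real.exp (-(m₁ * u₁) - m₂ * u₂) *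
          Real.exp ((p * u₁ + q * u₂) * A) *
          besselI0 (2 * Real.sqrt (p * q * u₁ * u₂) * A) =
      m₁ ^ m₁ / (m₁ - p * A) ^ m₁ * (m₂ ^ m₂ / (m₂ - q * A) ^ m₂) *
        gauss2F1 m₁ m₂ (p * q * A ^ 2 / ((m₁ - p * A) * (m₂ - q * A))) := by
  have hr₁ : 0 < m₁ - p * A := by nlinarith
  have hr₂ : 0 < m₂ - q * A := by nlinarith
  have hz : p * q * A ^ 2 / ((m₁ - p * A) * (m₂ - q * A)) ∈ Ico (0 : ℝ) 1 := by
    refine ⟨by positivity, (div_lt_one (by positivity)).2 ?_⟩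
    nlinarith [mul_pos hm₁ hm₂, mul_nonneg hm₁.le (by nlinarith : 0 ≤ -(q * A)),
      mul_nonneg (by nlinarith : 0 ≤ -(p * A)) hm₂.le]
  refine ⟨hz, ?_⟩
  rw [setIntegral_congr_fun measurableSet_Ioi fun u₁ (hu₁ : 0 < u₁) =>
      setIntegral_congr_fun measurableSet_Ioi fun u₂ (hu₂ : 0 < u₂) =>
        rpow_mul_exp_mul_besselI0_eq_tsum hp hq hu₁ hu₂,
    integral_Ioi_integral_Ioi_tsum_eq_gauss2F1 hm₁ hm₂ hr₁ hr₂
      (abs_lt.2 ⟨by linarith [hz.1], hz.2⟩),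
    one_div, one_div, inv_rpow hr₁.le, inv_rpow hr₂.le]
  have hΓ₁ := Gamma_pos_of_pos hm₁
  have hΓ₂ := Gamma_pos_of_pos hm₂
  field_simp
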